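/- Let P and Q be probability measures on a measurable space, let a ≠ b be real numbers, and let û be a measurable real-valued function of the observation. Then max{E_P[(û − a)²], E_Q[(û − b)²]} ≥ ((a−b)²/8)·(1 − TV(P,Q)), where TV(P,Q) = sup_A |P(A) − Q(A)|. -/

import Mathlib

/-!
Let `A = {|û − a| ≤ |û − b|}` be the acceptance region of the test that decides for `a` when `û`
is closer to `a`. Off `A` we have `|û − a| ≥ |a − b|/2`, and on `A` we have `|û − b| ≥ |a − b|/2`,
so by Markov's inequality `E_P[(û − a)²] ≥ (a − b)²/4 · P(Aᶜ)` and
`E_Q[(û − b)²] ≥ (a − b)²/4 · Q(A)`. The two error probabilities sum to at least `1 − TV(P, Q)`,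
and the maximum of the two risks dominates their mean.
-/

open MeasureTheory

/-- Total variation distance `sup_A |P(A) − Q(A)|` over measurable sets. -/
noncomputable def tvDist {α : Type*} [MeasurableSpace α] (P Q : Measure α) : ℝ :=
  ⨆ A : {s : Set α // MeasurableSet s}, |(P A.1).toReal - (Q A.1).toReal|

theorem sq_sub_div_four_le_sq_sub_of_abs_sub_le {u a b : ℝ} (h : |u - a| ≤ |u - b|) :
    (a - b) ^ 2 / 4 ≤ (u - b) ^ 2 := by
  have hdist : |a - b| ≤ 2 * |u - b| :=
    calc |a - b| = |(u - b) - (u - a)| := by ring_nf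
      _ ≤ |u - b| + |u - a| := abs_sub _ _
      _ ≤ 2 * |u - b| := by linarith
  have hsq : |a - b| ^ 2 ≤ (2 * |u - b|) ^ 2 := pow_le_pow_left₀ (abs_nonneg _) hdist 2
  rw [sq_abs, mul_pow, sq_abs] at hsq
  linarith

theorem mul_measureReal_le_integral_of_forall_mem_le {α : Type*} [MeasurableSpace α]
    {μ : Measure α} {f : α → ℝ} {s : Set α} {c : ℝ} (hs : MeasurableSet s)
    (hf_nonneg : 0 ≤ᵐ[μ] f) (hf : Integrable f μ) (h : ∀ x ∈ s, c ≤ f x) :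
    c * μ.real s ≤ ∫ x, f x ∂μ := by
  by_cases hμs : μ s = ⊤
  · simpa [measureReal_def, hμs] using integral_nonneg_of_ae hf_nonneg
  calc c * μ.real s ≤ ∫ x in s, f x ∂μ :=
        setIntegral_ge_of_const_le_real hs hμs h hf.integrableOn
    _ ≤ ∫ x, f x ∂μ := setIntegral_le_integral hf hf_nonneg

theorem abs_measureReal_sub_le_tvDist {α : Type*} [MeasurableSpace α] {P Q : Measure α}
    [IsFiniteMeasure P] [IsFiniteMeasure Q] {s : Set α} (hs : MeasurableSet s) :
    |P.real s - Q.real s| ≤ tvDist P Q := by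
  have hbdd : BddAbove (Set.range fun t : {t : Set α // MeasurableSet t} =>
      |(P t.1).toReal - (Q t.1).toReal|) := by
    refine ⟨P.real Set.univ + Q.real Set.univ, ?_⟩
    rintro _ ⟨t, rfl⟩
    calc |P.real t.1 - Q.real t.1| ≤ |P.real t.1| + |Q.real t.1| := abs_sub _ _
      _ = P.real t.1 + Q.real t.1 := by rw [abs_of_nonneg measureReal_nonneg,
            abs_of_nonneg measureReal_nonneg]
      _ ≤ P.real Set.univ + Q.real Set.univ :=
            add_le_add (measureReal_mono (Set.subset_univ _)) (measureReal_mono (Set.subset_univ _))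
  exact le_ciSup hbdd ⟨s, hs⟩

theorem one_sub_tvDist_le_measureReal_compl_add {α : Type*} [MeasurableSpace α]
    {P Q : Measure α} [IsProbabilityMeasure P] [IsProbabilityMeasure Q] {s : Set α}
    (hs : MeasurableSet s) : 1 - tvDist P Q ≤ P.real sᶜ + Q.real s := by
  rw [probReal_compl_eq_one_sub hs]
  linarith [le_abs_self (P.real s - Q.real s), abs_measureReal_sub_le_tvDist (P := P) (Q := Q) hs]

theorem two_point_lower_bound_general
    {α : Type*} [MeasurableSpace α] (P Q : Measure α)
    [IsProbabilityMeasure P] [IsProbabilityMeasure Q]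
    (a b : ℝ)
    (uhat : α → ℝ) (hmeas : Measurable uhat)
    (hIntP : Integrable (fun x => (uhat x - a) ^ 2) P)
    (hIntQ : Integrable (fun x => (uhat x - b) ^ 2) Q) :
    ((a - b) ^ 2 / 8) * (1 - tvDist P Q)
      ≤ max (∫ x, (uhat x - a) ^ 2 ∂P) (∫ x, (uhat x - b) ^ 2 ∂Q) := by
  set A : Set α := {x | |uhat x - a| ≤ |uhat x - b|}
  have hA : MeasurableSet A :=
    measurableSet_le (hmeas.sub_const a).abs (hmeas.sub_const b).abs
  have hriskP : (a - b) ^ 2 / 4 * P.real Aᶜ ≤ ∫ x, (uhat x - a) ^ 2 ∂P :=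
    mul_measureReal_le_integral_of_forall_mem_le hA.compl (ae_of_all _ fun _ ↦ sq_nonneg _)
      hIntP fun _ (hx : ¬_ ≤ _) ↦
        sub_sq_comm a b ▸ sq_sub_div_four_le_sq_sub_of_abs_sub_le (not_le.1 hx).le
  have hriskQ : (a - b) ^ 2 / 4 * Q.real A ≤ ∫ x, (uhat x - b) ^ 2 ∂Q :=
    mul_measureReal_le_integral_of_forall_mem_le hA (ae_of_all _ fun _ ↦ sq_nonneg _)
      hIntQ fun _ hx ↦ sq_sub_div_four_le_sq_sub_of_abs_sub_le hx
  calc (a - b) ^ 2 / 8 * (1 - tvDist P Q) ≤ (a - b) ^ 2 / 8 * (P.real Aᶜ + Q.real A) := by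
        gcongr
        exact one_sub_tvDist_le_measureReal_compl_add hA
    _ = ((a - b) ^ 2 / 4 * P.real Aᶜ + (a - b) ^ 2 / 4 * Q.real A) / 2 := by ring
    _ ≤ max (∫ x, (uhat x - a) ^ 2 ∂P) (∫ x, (uhat x - b) ^ 2 ∂Q) := by
        linarith [le_max_left (∫ x, (uhat x - a) ^ 2 ∂P) (∫ x, (uhat x - b) ^ 2 ∂Q),
          le_max_right (∫ x, (uhat x - a) ^ 2 ∂P) (∫ x, (uhat x - b) ^ 2 ∂Q)]

/-- two-point lower bound via total variation: for probability measures
`P, Q`, reals `a ≠ b`, and a measurable estimator `û`,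
`max{E_P[(û−a)²], E_Q[(û−b)²]} ≥ ((a−b)²/8)(1 − TV(P,Q))`. -/
theorem two_point_lower_bound
    {α : Type*} [MeasurableSpace α] (P Q : Measure α)
    [IsProbabilityMeasure P] [IsProbabilityMeasure Q]
    (a b : ℝ) (hab : a ≠ b)
    (uhat : α → ℝ) (hmeas : Measurable uhat)
    (hIntP : Integrable (fun x => (uhat x - a) ^ 2) P)
    (hIntQ : Integrable (fun x => (uhat x - b) ^ 2) Q) :
    ((a - b) ^ 2 / 8) * (1 - tvDist P Q)
      ≤ max (∫ x, (uhat x - a) ^ 2 ∂P) (∫ x, (uhat x - b) ^ 2 ∂Q) :=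
  two_point_lower_bound_general P Q a b uhat hmeas hIntP hIntQ
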